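/- Let P = {x ∈ ℝⁿ : −(1/2) p_jᵀ t_j ≤ p_jᵀ x ≤ (1/2) p_jᵀ t_j for all j = 1,…,m} and suppose there exist positive scalars γ_j and a symmetric positive definite matrix Q with γ_j p_j = Q t_j for all j. Then P = {x ∈ ℝⁿ : xᵀQx ≤ (x − t)ᵀQ(x − t) for all t ∈ {±t_1,…,±t_m}}, i.e. P is the Voronoi polytope of the vectors ±t_j with respect to the quadratic form f(x) = xᵀQx. -/

import Mathlib

open Matrix

/-!
Expanding the quadratic form, `xᵀQx ≤ (x - s)ᵀQ(x - s)` says `2 xᵀQs ≤ sᵀQs`. For `s = ±t_j` we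
have `Q t_j = γ_j p_j`, so after dividing by `γ_j > 0` this is exactly one of the two inequalities
`±p_jᵀx ≤ ½ p_jᵀt_j` that cut out `P`.
-/

namespace Matrix

variable {n R : Type*} [Fintype n]

theorem IsSymm.dotProduct_mulVec_comm [CommSemiring R] {Q : Matrix n n R} (hQ : Q.IsSymm)
    (x y : n → R) : x ⬝ᵥ Q *ᵥ y = y ⬝ᵥ Q *ᵥ x := by
  rw [dotProduct_mulVec, ← mulVec_transpose, hQ.eq, dotProduct_comm]

theorem IsSymm.dotProduct_mulVec_le_sub_iff [CommRing R] [PartialOrder R] [IsOrderedRing R]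
    {Q : Matrix n n R} (hQ : Q.IsSymm) (x s : n → R) :
    x ⬝ᵥ Q *ᵥ x ≤ (x - s) ⬝ᵥ Q *ᵥ (x - s) ↔ 2 * (x ⬝ᵥ Q *ᵥ s) ≤ s ⬝ᵥ Q *ᵥ s := by
  have hexpand : (x - s) ⬝ᵥ Q *ᵥ (x - s) - x ⬝ᵥ Q *ᵥ x = s ⬝ᵥ Q *ᵥ s - 2 * (x ⬝ᵥ Q *ᵥ s) := by
    rw [mulVec_sub, sub_dotProduct, dotProduct_sub, dotProduct_sub, hQ.dotProduct_mulVec_comm s x]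
    ring
  rw [← sub_nonneg, hexpand, sub_nonneg]

theorem IsSymm.dotProduct_mulVec_le_sub_iff_of_smul_eq_mulVec [Field R] [LinearOrder R]
    [IsStrictOrderedRing R] {Q : Matrix n n R} (hQ : Q.IsSymm) {p t : n → R} {γ : R}
    (hγ : 0 < γ) (hpt : γ • p = Q *ᵥ t) (x : n → R) :
    x ⬝ᵥ Q *ᵥ x ≤ (x - t) ⬝ᵥ Q *ᵥ (x - t) ↔ p ⬝ᵥ x ≤ 1 / 2 * (p ⬝ᵥ t) := by
  have hQt (y : n → R) : y ⬝ᵥ Q *ᵥ t = γ * (p ⬝ᵥ y) := by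
    rw [← hpt, dotProduct_smul, dotProduct_comm, smul_eq_mul]
  rw [hQ.dotProduct_mulVec_le_sub_iff, hQt, hQt, mul_left_comm, mul_le_mul_iff_of_pos_left hγ]
  constructor <;> intro h <;> linarith

end Matrix

theorem stmt_2 {n m : ℕ} (Q : Matrix (Fin n) (Fin n) ℝ) (hQ : Q.PosDef)
    (p t : Fin m → Fin n → ℝ) (γ : Fin m → ℝ) (hγ : ∀ j, 0 < γ j)
    (hpt : ∀ j, γ j • p j = Q.mulVec (t j)) :
    {x : Fin n → ℝ | ∀ j,
        -(1 / 2) * (p j ⬝ᵥ t j) ≤ p j ⬝ᵥ x ∧ p j ⬝ᵥ x ≤ (1 / 2) * (p j ⬝ᵥ t j)} =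
      {x : Fin n → ℝ | ∀ s ∈ ({v | ∃ j, v = t j ∨ v = -t j} : Set (Fin n → ℝ)),
        x ⬝ᵥ Q.mulVec x ≤ (x - s) ⬝ᵥ Q.mulVec (x - s)} := by
  have hsymm : Q.IsSymm := isHermitian_iff_isSymm.mp hQ.isHermitian
  have hplus j x := hsymm.dotProduct_mulVec_le_sub_iff_of_smul_eq_mulVec (hγ j) (hpt j) x
  have hminus j x := hsymm.dotProduct_mulVec_le_sub_iff_of_smul_eq_mulVec (p := -p j) (t := -t j)
    (hγ j) (by rw [smul_neg, hpt, mulVec_neg]) x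
  ext x
  simp only [Set.mem_ofPred_eq, forall_eq_apply_imp_iff, forall_exists_index, or_imp, forall_and,
    hplus, hminus, neg_dotProduct, dotProduct_neg, neg_neg, neg_mul, neg_le]
  exact and_comm
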